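/- Let σ₁ = (n_i) and σ₂ = (p_i) be infinite sequences of integers with n_i ≥ 2 and p_i ≥ 2 for all i. If σ₁ ≺ σ₂ in lexicographic order (at the first index k where they differ, n_k < p_k), then the minus continued fraction values satisfy (0, n₁, n₂, …) < (0, p₁, p₂, …). -/

import Mathlib

open Filter Topology

/-- Numerators: `pfun n (k+2) = p_k`, `p_{-2}=0`, `p_{-1}=1`, `p_k = n_k p_{k-1} - p_{k-2}`. -/
def pnum (n : ℕ → ℤ) : ℕ → ℤ
  | 0 => 0
  | 1 => 1
  | k + 2 => n k * pnum n (k + 1) - pnum n k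

/-- Denominators: `qden n (k+2) = q_k`, `q_{-2}=-1`, `q_{-1}=0`, `q_k = n_k q_{k-1} - q_{k-2}`. -/
def qden (n : ℕ → ℤ) : ℕ → ℤ
  | 0 => -1
  | 1 => 0
  | k + 2 => n k * qden n (k + 1) - qden n k

/-- Prepend the digit `0`, giving the digit sequence of `(0, n₁, n₂, …)`. -/
def prep (n : ℕ → ℤ) : ℕ → ℤ
  | 0 => 0
  | i + 1 => n i

/-- `x` is the value of the minus continued fraction `(0, n₁, n₂, …)`. -/
def IsMinusCF (x : ℝ) (n : ℕ → ℤ) : Prop :=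
  Tendsto (fun k : ℕ =>
      (pnum (prep n) (k + 2) : ℝ) / (qden (prep n) (k + 2) : ℝ)) atTop (𝓝 x)

/-!
The convergents `cₖ = pₖ / qₖ` of a minus continued fraction with digits `aᵢ ≥ 2` decrease
strictly, because `pₖ qₖ₋₁ - pₖ₋₁ qₖ = -1` and the `qₖ` increase. Replacing the last digit `aₖ`
of `cₖ` by a real `t` gives the Möbius map `t ↦ (t pₖ₋₁ - pₖ₋₂) / (t qₖ₋₁ - qₖ₋₂)`, increasing
on `t ≥ 1`. Since `[…, a, 1] = […, a - 1]`, the values `[a₀, …, aₖ - 1]` increase with `k` and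
stay below the convergents, so the limit lies in `[[a₀, …, aₖ - 1], [a₀, …, aₖ])` for every `k`.
If the digit sequences first differ at `k`, then `nₖ ≤ pₖ - 1` and
`x < [0, n₁, …, nₖ] ≤ [0, p₁, …, pₖ - 1] ≤ y` by monotonicity of the common Möbius map.
-/

open Set

namespace MinusCF

theorem pnum_mul_qden_sub_pnum_mul_qden (m : ℕ → ℤ) (j : ℕ) :
    pnum m (j + 1) * qden m j - pnum m j * qden m (j + 1) = -1 := by
  induction j with
  | zero => simp [pnum, qden]
  | succ j ih =>
    rw [pnum, qden]
    linear_combination ih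

theorem pnum_congr {m m' : ℕ → ℤ} (j : ℕ) (h : ∀ i, i + 1 < j → m i = m' i) :
    pnum m j = pnum m' j := by
  induction j using Nat.twoStepInduction with
  | zero | one => rfl
  | more j ih₀ ih₁ =>
    rw [pnum, pnum, h j (by omega), ih₀ fun i hi => h i (by omega),
      ih₁ fun i hi => h i (by omega)]

theorem qden_congr {m m' : ℕ → ℤ} (j : ℕ) (h : ∀ i, i + 1 < j → m i = m' i) :
    qden m j = qden m' j := by
  induction j using Nat.twoStepInduction with
  | zero | one => rfl
  | more j ih₀ ih₁ =>
    rw [qden, qden, h j (by omega), ih₀ fun i hi => h i (by omega),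
      ih₁ fun i hi => h i (by omega)]

section

variable (m : ℕ → ℤ) (hm : ∀ j, 2 ≤ m (j + 1))
include hm

theorem qden_strictMono : StrictMono (qden m) := by
  have key : ∀ j, 0 ≤ qden m (j + 1) ∧ qden m (j + 1) < qden m (j + 2) := by
    intro j
    induction j with
    | zero => simp [qden]
    | succ j ih =>
      have hrec : qden m (j + 3) = m (j + 1) * qden m (j + 2) - qden m (j + 1) := rfl
      exact ⟨ih.1.trans ih.2.le, by nlinarith [hm j, ih.1, ih.2]⟩
  refine strictMono_nat_of_lt_succ fun j => ?_
  cases j with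
  | zero => simp [qden]
  | succ j => exact (key j).2

theorem qden_pos (j : ℕ) : 0 < qden m (j + 2) :=
  qden_strictMono m hm (show 1 < j + 2 by omega)

end

noncomputable def convergent (m : ℕ → ℤ) (j : ℕ) : ℝ :=
  pnum m (j + 2) / qden m (j + 2)

/-- The value of `m 0 − 1/(m 1 − ⋯ − 1/(m (j - 1) − 1/t))`: the convergent `convergent m j` with
its last digit `m j` replaced by `t`. -/
noncomputable def withLast (m : ℕ → ℤ) (j : ℕ) (t : ℝ) : ℝ :=
  (t * pnum m (j + 1) - pnum m j) / (t * qden m (j + 1) - qden m j)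

theorem withLast_self (m : ℕ → ℤ) (j : ℕ) : withLast m j (m j) = convergent m j := by
  simp only [withLast, convergent, pnum, qden]
  push_cast
  rfl

theorem withLast_one (m : ℕ → ℤ) (j : ℕ) : withLast m (j + 1) 1 = withLast m j (m j - 1) := by
  simp only [withLast, pnum, qden]
  push_cast
  ring_nf

theorem withLast_congr {m m' : ℕ → ℤ} {j : ℕ} (h : ∀ i < j, m i = m' i) :
    withLast m j = withLast m' j := by
  funext t
  rw [withLast, withLast, pnum_congr j (fun i hi => h i (by omega)),
    pnum_congr (j + 1) (fun i hi => h i (by omega)), qden_congr j (fun i hi => h i (by omega)),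
    qden_congr (j + 1) (fun i hi => h i (by omega))]

section

variable (m : ℕ → ℤ) (hm : ∀ j, 2 ≤ m (j + 1))
include hm

theorem convergent_succ_lt (j : ℕ) : convergent m (j + 1) < convergent m j := by
  have hdet := pnum_mul_qden_sub_pnum_mul_qden m (j + 2)
  have hq : (0 : ℝ) < qden m (j + 2) := mod_cast qden_pos m hm j
  have hq' : (0 : ℝ) < qden m (j + 3) := mod_cast qden_pos m hm (j + 1)
  rw [convergent, convergent, div_lt_div_iff₀ hq' hq]
  exact_mod_cast (by linarith : pnum m (j + 3) * qden m (j + 2) < pnum m (j + 2) * qden m (j + 3))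

theorem lt_convergent_of_tendsto {x : ℝ} (hx : Tendsto (convergent m) atTop (𝓝 x)) (j : ℕ) :
    x < convergent m j :=
  ((strictAnti_nat_of_succ_lt (convergent_succ_lt m hm)).antitone.le_of_tendsto hx (j + 1)).trans_lt
    (convergent_succ_lt m hm j)

theorem withLast_strictMonoOn (j : ℕ) : StrictMonoOn (withLast m j) (Ici 1) := by
  intro s hs t ht hst
  have hdet : (pnum m (j + 1) * qden m j - pnum m j * qden m (j + 1) : ℝ) = -1 :=
    mod_cast pnum_mul_qden_sub_pnum_mul_qden m j
  have hq : (qden m j : ℝ) < qden m (j + 1) := mod_cast qden_strictMono m hm (Nat.lt_succ_self j)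
  have hq₀ : (0 : ℤ) ≤ qden m (j + 1) := (qden_strictMono m hm).monotone (Nat.le_add_left 1 j)
  have hden : ∀ u : ℝ, 1 ≤ u → 0 < u * qden m (j + 1) - qden m j := fun u hu => by
    nlinarith [(mod_cast hq₀ : (0 : ℝ) ≤ qden m (j + 1))]
  rw [withLast, withLast, div_lt_div_iff₀ (hden s hs) (hden t ht)]
  have hcross : (t * pnum m (j + 1) - pnum m j) * (s * qden m (j + 1) - qden m j)
      - (s * pnum m (j + 1) - pnum m j) * (t * qden m (j + 1) - qden m j) = t - s := by
    linear_combination (s - t) * hdet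
  linarith

theorem withLast_pred_lt_convergent (j : ℕ) :
    withLast m (j + 1) (m (j + 1) - 1) < convergent m j := by
  have hdigit : (1 : ℝ) ≤ m (j + 1) - 1 := by linarith [(mod_cast hm j : (2 : ℝ) ≤ m (j + 1))]
  calc withLast m (j + 1) (m (j + 1) - 1)
      < withLast m (j + 1) (m (j + 1)) :=
        withLast_strictMonoOn m hm (j + 1) hdigit (hdigit.trans (by linarith)) (by linarith)
    _ = convergent m (j + 1) := withLast_self m (j + 1)
    _ < convergent m j := convergent_succ_lt m hm j

theorem monotone_withLast_pred : Monotone fun j => withLast m (j + 1) (m (j + 1) - 1) := by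
  refine monotone_nat_of_le_succ fun j => ?_
  have hdigit : (1 : ℝ) ≤ m (j + 2) - 1 := by
    linarith [(mod_cast hm (j + 1) : (2 : ℝ) ≤ m (j + 2))]
  calc withLast m (j + 1) (m (j + 1) - 1)
      = withLast m (j + 2) 1 := (withLast_one m (j + 1)).symm
    _ ≤ withLast m (j + 2) (m (j + 2) - 1) :=
        (withLast_strictMonoOn m hm (j + 2)).monotoneOn self_mem_Ici hdigit hdigit

theorem withLast_pred_le_of_tendsto {x : ℝ} (hx : Tendsto (convergent m) atTop (𝓝 x)) (j : ℕ) :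
    withLast m (j + 1) (m (j + 1) - 1) ≤ x :=
  ge_of_tendsto hx <| eventually_atTop.2 ⟨j, fun _ hi =>
    (monotone_withLast_pred m hm hi).trans (withLast_pred_lt_convergent m hm _).le⟩

end

end MinusCF

open MinusCF in
theorem lex_lt_of_minus_cf (n p : ℕ → ℤ) (hn : ∀ i, 2 ≤ n i) (hp : ∀ i, 2 ≤ p i)
    (x y : ℝ) (hx : IsMinusCF x n) (hy : IsMinusCF y p)
    (hlex : ∃ k : ℕ, (∀ j, j < k → n j = p j) ∧ n k < p k) :
    x < y := by
  obtain ⟨k, hagree, hlt⟩ := hlex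
  have hprefix : ∀ i < k + 1, prep n i = prep p i := by
    rintro (_ | i) hi
    · rfl
    · exact hagree i (by omega)
  have hnk : (1 : ℝ) ≤ n k := by linarith [(mod_cast hn k : (2 : ℝ) ≤ n k)]
  have hnp : (n k : ℝ) ≤ p k - 1 := by exact_mod_cast Int.le_sub_one_of_lt hlt
  calc x < convergent (prep n) (k + 1) := lt_convergent_of_tendsto _ hn hx _
    _ = withLast (prep p) (k + 1) (n k) := by rw [← withLast_self, withLast_congr hprefix]; rfl
    _ ≤ withLast (prep p) (k + 1) (p k - 1) :=
        (withLast_strictMonoOn _ hp _).monotoneOn hnk (hnk.trans hnp) hnp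
    _ ≤ y := withLast_pred_le_of_tendsto _ hp hy k
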